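/- Let M be a compact topological space, N a topological space and π : M → N a continuous surjective map. Suppose there exists g ∈ C(M,ℝ) such that every element of C(M,ℝ) can be written as a polynomial in g with coefficients in the image of φ_π (i.e. C(M,ℝ) = φ_π(C(N,ℝ))[g]). Then g, and hence every element of C(M,ℝ), is integral over C(N,ℝ) via φ_π; consequently C(M,ℝ) is a finitely generated C(N,ℝ)-module. -/

import Mathlib

/-!
Shift `g` by a constant so that `g₁ = g + c` takes values in `[1, K]`. Then `g₁` is a unit and
`C(M, ℝ) = φ_π(C(N, ℝ))[g₁]`, so its inverse `u` satisfies a monic equation `P(u) = 0` with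
coefficients in `C(N, ℝ)`. For `y : N` let `P_y ∈ ℂ[X]` be `P` with coefficients evaluated at
`y`, and let `W_y = ∏ (X - f z)` over the roots `z` of `P_y`, where `f` is a continuous function
that agrees with `t ↦ t⁻¹` on `[K⁻¹, ∞)`. Since `u ≥ K⁻¹`, `W_{π x}` vanishes at `g₁ x`. The
coefficients of `W_y` are symmetric functions of the roots of `P_y`, so they depend continuously
on the coefficients of `P_y`: the Vieta map `ℂᵐ → ℂᵐ` is a proper continuous surjection, hence a
quotient map. Their real parts therefore give a monic equation for `g₁` over `C(N, ℝ)`.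
-/

/-- The ring homomorphism `φ_π : C(N, ℝ) →+* C(M, ℝ)`, `f ↦ f ∘ π`, induced by a
continuous map `π : M → N`. -/
noncomputable def phiPi {M N : Type*} [TopologicalSpace M] [TopologicalSpace N]
    (π : C(M, N)) : C(N, ℝ) →+* C(M, ℝ) :=
  (ContinuousMap.compRightAlgHom ℝ ℝ π).toRingHom

open Polynomial

theorem isIntegral_of_mul_eq_one_of_mem_adjoin {R S : Type*} [CommRing R] [CommRing S]
    [Algebra R S] {x y : S} (hxy : x * y = 1) (hy : y ∈ Algebra.adjoin R {x}) :
    IsIntegral R y := by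
  obtain ⟨p, rfl⟩ := (Algebra.adjoin_singleton_eq_range_aeval R x ▸ hy : _)
  let : Invertible x := ⟨aeval x p, mul_comm x _ ▸ hxy, hxy⟩
  set n := p.natDegree
  have hreflect : eval₂ (algebraMap R S) (⅟x) (reflect n p) * x ^ n = aeval x p :=
    eval₂_reflect_mul_pow _ x n p le_rfl
  refine ⟨X ^ (n + 1) - reflect n p, monic_X_pow_sub ?_, ?_⟩
  · refine degree_le_natDegree.trans_lt ?_
    have : (reflect n p).natDegree ≤ n := natDegree_reflect_le.trans (max_le le_rfl le_rfl)
    exact_mod_cast this.trans_lt n.lt_succ_self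
  · change eval₂ _ (⅟x) _ = 0
    rw [eval₂_sub, eval₂_X_pow, sub_eq_zero]
    -- `y = p x` and `x = y⁻¹`, so `y ^ (n + 1) = y ^ n * p (y⁻¹)` is `reflect n p` at `y`.
    calc (⅟x) ^ (n + 1) = (⅟x) ^ n * aeval x p := pow_succ _ n
      _ = eval₂ (algebraMap R S) (⅟x) (reflect n p) * (x * ⅟x) ^ n := by
        rw [← hreflect, mul_pow]; ring
      _ = eval₂ (algebraMap R S) (⅟x) (reflect n p) := by rw [mul_invOf_self, one_pow, mul_one]

theorem Algebra.adjoin_singleton_add_algebraMap {R A : Type*} [CommRing R] [Ring A]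
    [Algebra R A] (x : A) (r : R) : adjoin R {x + algebraMap R A r} = adjoin R {x} :=
  le_antisymm
    (adjoin_le (Set.singleton_subset_iff.2
      (add_mem (self_mem_adjoin_singleton R x) (Subalgebra.algebraMap_mem _ r))))
    (adjoin_le (Set.singleton_subset_iff.2 (by
      simpa using sub_mem (self_mem_adjoin_singleton R (x + algebraMap R A r))
        (Subalgebra.algebraMap_mem _ r))))

theorem Multiset.exists_fin_map_univ_eq {α : Type*} (s : Multiset α) {m : ℕ}
    (hs : Multiset.card s = m) : ∃ r : Fin m → α, Finset.univ.val.map r = s := by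
  subst hs
  refine ⟨fun i => s.toList[i.cast (Multiset.length_toList s).symm], ?_⟩
  rw [Fin.univ_val_map]
  conv_rhs => rw [← Multiset.coe_toList s]
  congr 1
  exact List.ext_getElem (by simp) (by simp)

section MonicOfCoeffs

variable {R : Type*} [CommRing R] {m : ℕ}

noncomputable def monicOfCoeffs (c : Fin m → R) : R[X] :=
  X ^ m + ∑ i : Fin m, C (c i) * X ^ (i : ℕ)

theorem monicOfCoeffs_monic (c : Fin m → R) : (monicOfCoeffs c).Monic :=
  monic_X_pow_add (degree_sum_fin_lt c)

theorem natDegree_monicOfCoeffs [Nontrivial R] (c : Fin m → R) :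
    (monicOfCoeffs c).natDegree = m :=
  natDegree_eq_of_degree_eq_some <| by
    rw [monicOfCoeffs, degree_add_eq_left_of_degree_lt, degree_X_pow]
    exact (degree_X_pow (R := R) m).symm ▸ degree_sum_fin_lt c

theorem coeff_monicOfCoeffs (c : Fin m → R) (i : Fin m) : (monicOfCoeffs c).coeff i = c i := by
  simp [monicOfCoeffs, coeff_X_pow, coeff_C_mul, i.isLt.ne, Fin.val_inj]

theorem eval₂_monicOfCoeffs {S : Type*} [CommRing S] (f : R →+* S)
    (z : S) (c : Fin m → R) :
    (monicOfCoeffs c).eval₂ f z = z ^ m + ∑ i : Fin m, f (c i) * z ^ (i : ℕ) := by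
  simp [monicOfCoeffs, eval₂_finsetSum]

theorem Polynomial.Monic.eq_monicOfCoeffs {p : R[X]} (hp : p.Monic) (hdeg : p.natDegree = m) :
    p = monicOfCoeffs fun i : Fin m => p.coeff i := by
  conv_lhs => rw [hp.as_sum, hdeg, ← Fin.sum_univ_eq_sum_range]
  rfl

theorem cauchyBound_monicOfCoeffs_le {K : Type*} [NormedField K] (c : Fin m → K) :
    cauchyBound (monicOfCoeffs c) ≤ ‖c‖₊ + 1 := by
  rw [cauchyBound, (monicOfCoeffs_monic c).leadingCoeff, nnnorm_one, div_one,
    natDegree_monicOfCoeffs]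
  gcongr
  refine Finset.sup_le fun i hi => ?_
  have hi := Finset.mem_range.mp hi
  rw [show i = ((⟨i, hi⟩ : Fin m) : ℕ) from rfl, coeff_monicOfCoeffs]
  exact nnnorm_le_pi_nnnorm c _

theorem continuous_coeff_prod_X_sub_C [TopologicalSpace R] [IsTopologicalRing R] (k : ℕ) :
    Continuous fun r : Fin m → R => (∏ j, (X - C (r j))).coeff k := by
  by_cases hk : k ≤ m
  · have hcoeff (r : Fin m → R) : (∏ j, (X - C (r j))).coeff k =
        ∑ t ∈ Finset.univ.powersetCard (m - k), ∏ j ∈ t, -r j := by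
      simp_rw [sub_eq_add_neg, ← C_neg]
      simpa using Finset.prod_X_add_C_coeff Finset.univ (fun j => -r j) (by simpa using hk)
    simp_rw [hcoeff]
    fun_prop
  · have hdeg (r : Fin m → R) : (∏ j, (X - C (r j))).natDegree < k := by
      refine (natDegree_prod_le _ _).trans_lt ?_
      refine lt_of_le_of_lt (Finset.sum_le_sum fun j _ => natDegree_X_sub_C_le (r j)) ?_
      simpa using hk
    simp_rw [coeff_eq_zero_of_natDegree_lt (hdeg _)]
    exact continuous_const

end MonicOfCoeffs

section Vieta

variable {R : Type*} [CommRing R] {m : ℕ}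

noncomputable def vieta (r : Fin m → R) : Fin m → R :=
  fun i => (∏ j, (X - C (r j))).coeff i

theorem continuous_vieta [TopologicalSpace R] [IsTopologicalRing R] :
    Continuous (vieta : (Fin m → R) → Fin m → R) :=
  continuous_pi fun i => continuous_coeff_prod_X_sub_C i

theorem prod_X_sub_C_eq_monicOfCoeffs_vieta [Nontrivial R] (r : Fin m → R) :
    ∏ j, (X - C (r j)) = monicOfCoeffs (vieta r) :=
  (monic_prod_of_monic _ _ fun j _ => monic_X_sub_C (r j)).eq_monicOfCoeffs (by simp)

theorem prod_fin_X_sub_C_eq_multiset_prod (r : Fin m → R) :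
    ∏ j, (X - C (r j)) = ((Finset.univ.val.map r).map fun a => X - C a).prod := by
  rw [Multiset.map_map]
  rfl

theorem roots_prod_fin_X_sub_C [IsDomain R] (r : Fin m → R) :
    (∏ j, (X - C (r j))).roots = Finset.univ.val.map r := by
  rw [prod_fin_X_sub_C_eq_multiset_prod, roots_multiset_prod_X_sub_C]

theorem vieta_surjective {K : Type*} [Field K] [IsAlgClosed K] :
    Function.Surjective (vieta : (Fin m → K) → Fin m → K) := by
  intro c
  have hcard : Multiset.card (monicOfCoeffs c).roots = m := by
    rw [IsAlgClosed.card_roots_eq_natDegree, natDegree_monicOfCoeffs]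
  obtain ⟨r, hr⟩ := (monicOfCoeffs c).roots.exists_fin_map_univ_eq hcard
  have hprod : ∏ j, (X - C (r j)) = monicOfCoeffs c := by
    rw [prod_fin_X_sub_C_eq_multiset_prod, hr]
    exact prod_multiset_X_sub_C_of_monic_of_roots_card_eq (monicOfCoeffs_monic c)
      (by rw [hcard, natDegree_monicOfCoeffs])
  refine ⟨r, funext fun i => ?_⟩
  rw [vieta, hprod, coeff_monicOfCoeffs]

theorem isProperMap_vieta : IsProperMap (vieta : (Fin m → ℂ) → Fin m → ℂ) := by
  refine isProperMap_iff_isCompact_preimage.2 ⟨continuous_vieta, fun K hK => ?_⟩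
  obtain ⟨B, hB⟩ := hK.isBounded.subset_closedBall 0
  refine Metric.isCompact_of_isClosed_isBounded (hK.isClosed.preimage continuous_vieta)
    ((Metric.isBounded_closedBall (x := 0) (r := B + 1)).subset fun r hr => ?_)
  have hvieta : ‖vieta r‖ ≤ B := by simpa using hB hr
  rw [mem_closedBall_zero_iff, pi_norm_le_iff_of_nonneg (by linarith [norm_nonneg (vieta r)])]
  intro j
  have hroot : (monicOfCoeffs (vieta r)).IsRoot (r j) := by
    rw [← prod_X_sub_C_eq_monicOfCoeffs_vieta]
    simpa [eval_prod, Finset.prod_eq_zero_iff] using ⟨j, sub_self _⟩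
  have hbound : ‖r j‖₊ < ‖vieta r‖₊ + 1 :=
    (hroot.norm_lt_cauchyBound (monicOfCoeffs_monic _).ne_zero).trans_le
      (cauchyBound_monicOfCoeffs_le _)
  have : ‖r j‖ < ‖vieta r‖ + 1 := by exact_mod_cast hbound
  linarith

end Vieta

theorem continuous_coeff_prod_map_roots_monicOfCoeffs {m : ℕ} {f : ℂ → ℂ}
    (hf : Continuous f) (k : ℕ) : Continuous fun c : Fin m → ℂ =>
      (((monicOfCoeffs c).roots.map f).map fun z => X - C z).prod.coeff k := by
  have hquot : Topology.IsQuotientMap (vieta : (Fin m → ℂ) → Fin m → ℂ) :=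
    isProperMap_vieta.isClosedMap.isQuotientMap continuous_vieta vieta_surjective
  rw [hquot.continuous_iff]
  refine ((continuous_coeff_prod_X_sub_C k).comp
    (continuous_pi fun j => hf.comp (continuous_apply j))).congr fun r => ?_
  change _ = (((monicOfCoeffs (vieta r)).roots.map f).map fun z => X - C z).prod.coeff k
  rw [← prod_X_sub_C_eq_monicOfCoeffs_vieta, roots_prod_fin_X_sub_C, Multiset.map_map,
    Multiset.map_map]
  rfl

theorem continuous_coeff_prod_map_roots {Y : Type*} [TopologicalSpace Y] {m : ℕ}
    {p : Y → ℂ[X]} (hmonic : ∀ y, (p y).Monic) (hdeg : ∀ y, (p y).natDegree = m)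
    (hcoeff : ∀ i, Continuous fun y => (p y).coeff i) {f : ℂ → ℂ} (hf : Continuous f) (k : ℕ) :
    Continuous fun y => (((p y).roots.map f).map fun z => X - C z).prod.coeff k := by
  refine ((continuous_coeff_prod_map_roots_monicOfCoeffs hf k).comp
    (continuous_pi fun i : Fin m => hcoeff i)).congr fun y => ?_
  simp only [Function.comp_apply, ← (hmonic y).eq_monicOfCoeffs (hdeg y)]

section PullbackIntegral

variable {M N : Type*} [TopologicalSpace M] [TopologicalSpace N]

theorem isIntegralElem_phiPi_of_forall (π : C(M, N)) {v : C(M, ℝ)} {m : ℕ}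
    (a : Fin m → C(N, ℝ)) (h : ∀ x, v x ^ m + ∑ i : Fin m, a i (π x) * v x ^ (i : ℕ) = 0) :
    (phiPi π).IsIntegralElem v :=
  ⟨monicOfCoeffs a, monicOfCoeffs_monic a, by
    rw [eval₂_monicOfCoeffs]
    ext x
    simpa [phiPi] using h x⟩

theorem isIntegralElem_phiPi_of_comp (π : C(M, N)) {u v : C(M, ℝ)}
    (hu : (phiPi π).IsIntegralElem u) {f : ℂ → ℂ} (hf : Continuous f)
    (hfuv : ∀ x, f (u x) = v x) : (phiPi π).IsIntegralElem v := by
  obtain ⟨P, hPmonic, hPu⟩ := hu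
  set m := P.natDegree
  let ρ (y : N) : C(N, ℝ) →+* ℂ :=
    Complex.ofRealHom.comp (ContinuousMap.evalAlgHom ℝ ℝ y).toRingHom
  let p (y : N) : ℂ[X] := P.map (ρ y)
  have hp_monic (y : N) : (p y).Monic := hPmonic.map _
  have hp_deg (y : N) : (p y).natDegree = m := hPmonic.natDegree_map _
  have hp_coeff (i : ℕ) : Continuous fun y => (p y).coeff i := by
    simp only [p, coeff_map]
    exact Complex.continuous_ofReal.comp (P.coeff i).continuous
  have hp_root (x : M) : (u x : ℂ) ∈ (p (π x)).roots := by
    refine (mem_roots (hp_monic _).ne_zero).2 ?_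
    have := congrArg (Complex.ofRealHom.comp (ContinuousMap.evalAlgHom ℝ ℝ x).toRingHom) hPu
    rw [hom_eval₂, map_zero] at this
    rw [IsRoot, eval_map]
    exact this
  let W (y : N) : ℂ[X] := (((p y).roots.map f).map fun z => X - C z).prod
  have hW_monic (y : N) : (W y).Monic :=
    monic_multiset_prod_of_monic _ _ fun z _ => monic_X_sub_C _
  have hW_deg (y : N) : (W y).natDegree = m := by
    rw [natDegree_multiset_prod_X_sub_C_eq_card, Multiset.card_map,
      IsAlgClosed.card_roots_eq_natDegree, hp_deg]
  have hW_root (x : M) : (W (π x)).eval (v x : ℂ) = 0 := by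
    rw [eval_multiset_prod]
    refine Multiset.prod_eq_zero (Multiset.mem_map.2 ⟨_, Multiset.mem_map_of_mem _
      (Multiset.mem_map_of_mem f (hp_root x)), ?_⟩)
    simp [hfuv]
  let a (i : Fin m) : C(N, ℝ) :=
    ⟨fun y => ((W y).coeff i).re, Complex.continuous_re.comp
      (continuous_coeff_prod_map_roots hp_monic hp_deg hp_coeff hf i)⟩
  refine isIntegralElem_phiPi_of_forall π a fun x => ?_
  have := congrArg Complex.re (hW_root x)
  rw [(hW_monic _).eq_monicOfCoeffs (hW_deg _), eval, eval₂_monicOfCoeffs] at this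
  simpa [a, Complex.re_sum, ← Complex.ofReal_pow, Complex.re_mul_ofReal] using this

theorem isIntegralElem_phiPi_of_mul_eq_one (π : C(M, N)) {u v : C(M, ℝ)}
    (hu : (phiPi π).IsIntegralElem u) (huv : u * v = 1) {δ : ℝ} (hδ : 0 < δ)
    (hδu : ∀ x, δ ≤ u x) : (phiPi π).IsIntegralElem v := by
  refine isIntegralElem_phiPi_of_comp π hu (f := fun z => ((max z.re δ)⁻¹ : ℝ))
    (Complex.continuous_ofReal.comp ((Complex.continuous_re.max continuous_const).inv₀
      fun z => (hδ.trans_le (le_max_right _ _)).ne')) fun x => ?_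
  rw [Complex.ofReal_re, max_eq_left (hδu x),
    inv_eq_of_mul_eq_one_right (congrArg (· x) huv : u x * v x = 1)]

end PullbackIntegral

theorem simple_implies_finite_general {M N : Type*} [TopologicalSpace M] [CompactSpace M]
    [TopologicalSpace N] (π : C(M, N))
    (g : C(M, ℝ))
    (hgen : ∀ h : C(M, ℝ), ∃ q : Polynomial C(N, ℝ), Polynomial.eval₂ (phiPi π) g q = h) :
    (phiPi π).IsIntegralElem g ∧ (phiPi π).IsIntegral ∧ (phiPi π).Finite := by
  let _ : Algebra C(N, ℝ) C(M, ℝ) := (phiPi π).toAlgebra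
  have hadj : Algebra.adjoin C(N, ℝ) {g} = ⊤ :=
    eq_top_iff.2 fun h _ => by rw [Algebra.adjoin_singleton_eq_range_aeval]; exact hgen h
  let g₁ : C(M, ℝ) := g + algebraMap C(N, ℝ) C(M, ℝ) (ContinuousMap.const N (‖g‖ + 1))
  have hg₁ (x : M) : 1 ≤ g₁ x ∧ g₁ x ≤ 2 * ‖g‖ + 1 := by
    have := abs_le.1 ((g.norm_coe_le_norm x).trans_eq' (Real.norm_eq_abs _).symm)
    change 1 ≤ g x + (‖g‖ + 1) ∧ g x + (‖g‖ + 1) ≤ 2 * ‖g‖ + 1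
    constructor <;> linarith
  obtain ⟨u, hg₁u⟩ := (ContinuousMap.isUnit_iff_forall_ne_zero g₁).2
    (fun x => (zero_lt_one.trans_le (hg₁ x).1).ne') |>.exists_right_inv
  have hu : (phiPi π).IsIntegralElem u :=
    isIntegral_of_mul_eq_one_of_mem_adjoin hg₁u
      (by rw [Algebra.adjoin_singleton_add_algebraMap, hadj]; exact Algebra.mem_top)
  have hg₁_int : (phiPi π).IsIntegralElem g₁ :=
    isIntegralElem_phiPi_of_mul_eq_one π hu (mul_comm g₁ u ▸ hg₁u) (δ := (2 * ‖g‖ + 1)⁻¹)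
      (by positivity) fun x => by
      rw [← inv_eq_of_mul_eq_one_right (congrArg (· x) hg₁u : g₁ x * u x = 1)]
      exact inv_anti₀ (zero_lt_one.trans_le (hg₁ x).1) (hg₁ x).2
  have hg : IsIntegral C(N, ℝ) g := by
    simpa [g₁] using IsIntegral.sub (R := C(N, ℝ)) hg₁_int
      (isIntegral_algebraMap (x := ContinuousMap.const N (‖g‖ + 1)))
  have hfin : (phiPi π).Finite := ⟨by
    rw [← Algebra.top_toSubmodule, ← hadj]
    exact hg.fg_adjoin_singleton⟩
  exact ⟨hg, hfin.to_isIntegral, hfin⟩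

/-- Let `M` be a compact topological space, `N` a topological space
and `π : M → N` a continuous surjection. If there exists `g ∈ C(M, ℝ)` such that every
element of `C(M, ℝ)` is a polynomial in `g` with coefficients in the image of `φ_π`,
then `g` (and hence every element of `C(M, ℝ)`) is integral over `C(N, ℝ)` via `φ_π`;
consequently `C(M, ℝ)` is a finitely generated `C(N, ℝ)`-module. -/
theorem simple_implies_finite {M N : Type*} [TopologicalSpace M] [CompactSpace M]
    [TopologicalSpace N] (π : C(M, N)) (hsurj : Function.Surjective π)
    (g : C(M, ℝ))
    (hgen : ∀ h : C(M, ℝ), ∃ q : Polynomial C(N, ℝ), Polynomial.eval₂ (phiPi π) g q = h) :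
    (phiPi π).IsIntegralElem g ∧ (phiPi π).IsIntegral ∧ (phiPi π).Finite :=
  simple_implies_finite_general π g hgen
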